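/- Consider generalised scale-free percolation SFP on ℤ^d whose vertex-weight distribution W has power-law tails with exponent τ ∈ (1,3) and whose connection function h satisfies the edge-connection bounds with long-range parameter α ∈ (0,1]. Let the penalty function be f(w₁,w₂) = (w₁w₂)^μ for some μ > 0. Then explosion occurs almost surely, P(Y_f(0) < ∞) = 1, and it is sideways explosion: there exists T < ∞ such that with positive probability the origin is incident to infinitely many edges of cost at most T, i.e. P(N₁^T(0) = ∞) > 0. -/

import Mathlib

/-!
For `α ≤ 1` the edge-connection lower bound gives `h(x, W_0, W_x) ≥ c̲ ‖x‖^{-d}` as soon as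
`‖x‖^{-d} ≤ l(W_0) l(W_x)`, and `∑_{x ∈ ℤ^d} ‖x‖^{-d} = ∞` since every dyadic cube contributes a
fixed amount. Fix levels `w₀, t₀` with `P(W ≤ w₀), P(L ≤ t₀) > 0`. The events
`{W_x ≤ w₀, U_{0x} ≤ κ ‖x‖^{-d}, L_{0x} ≤ t₀}` depend on disjoint sets of independent variables and
have divergent total probability, so by the second Borel–Cantelli lemma almost surely infinitely
many of them occur. For all but finitely many of these `x` the edge `{0, x}` is present and costs
at most `t₀ (W_0 w₀)^μ`. So the origin has infinitely many neighbours within a finite cost, which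
forces explosion, and on the event `{W_0 ≤ w₀}` of positive probability that cost bound is the
constant `t₀ w₀^{2μ}`.
-/

open MeasureTheory ProbabilityTheory Filter Set
open scoped ENNReal NNReal

noncomputable section

namespace SFP

/-- Euclidean norm on `ℝ^d` (realised as `Fin d → ℝ`). -/
def rnorm {d : ℕ} (x : Fin d → ℝ) : ℝ := Real.sqrt (∑ i, x i ^ 2)

/-- Euclidean norm of an integer vector in `ℤ^d`. -/
def znorm {d : ℕ} (x : Fin d → ℤ) : ℝ := rnorm fun i => (x i : ℝ)

/-- A function varies slowly at infinity. -/
def SlowlyVarying (l : ℝ → ℝ) : Prop :=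
  ∀ c : ℝ, 0 < c → Tendsto (fun x => l (c * x) / l x) atTop (nhds 1)

/-- `l(w) = exp (-c₂ (log w)^γ)`. -/
def lfun (c₂ γ w : ℝ) : ℝ := Real.exp (-c₂ * Real.log w ^ γ)

/-- Edge-connection bounds, with explicit constants, for long-range parameter `α ∈ (0,∞]`. -/
def EdgeBoundsC {d : ℕ} (h : (Fin d → ℝ) → ℝ → ℝ → ℝ) (α : ℝ≥0∞)
    (γ cl cu cl1 cu1 c₂ : ℝ) : Prop :=
  γ ∈ Set.Ioo (0 : ℝ) 1 ∧ 0 < cl ∧ 0 < cu ∧ 0 < cl1 ∧ 0 < cu1 ∧ 0 < c₂ ∧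
    ((α ≠ ⊤ ∧ ∀ x : Fin d → ℝ, x ≠ 0 → ∀ w₁ w₂ : ℝ, 1 ≤ w₁ → 1 ≤ w₂ →
        cl * min (lfun c₂ γ w₁ * lfun c₂ γ w₂)
            ((w₁ * w₂ / rnorm x ^ d) ^ α.toReal) ≤ h x w₁ w₂ ∧
          h x w₁ w₂ ≤ cu * min 1 ((w₁ * w₂ / rnorm x ^ d) ^ α.toReal)) ∨
      (α = ⊤ ∧ ∀ x : Fin d → ℝ, x ≠ 0 → ∀ w₁ w₂ : ℝ, 1 ≤ w₁ → 1 ≤ w₂ →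
        cl * min (lfun c₂ γ w₁ * lfun c₂ γ w₂)
            (if rnorm x ^ d ≤ cl1 * (w₁ * w₂) then 1 else 0) ≤ h x w₁ w₂ ∧
          h x w₁ w₂ ≤ cu * (if rnorm x ^ d ≤ cu1 * (w₁ * w₂) then 1 else 0)))

/-- Edge-connection bounds with long-range parameter `α ∈ (0,∞]`. -/
def EdgeBounds {d : ℕ} (h : (Fin d → ℝ) → ℝ → ℝ → ℝ) (α : ℝ≥0∞) : Prop :=
  ∃ γ cl cu cl1 cu1 c₂ : ℝ, EdgeBoundsC h α γ cl cu cl1 cu1 c₂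

/-- The random variable `W` has power-law tails with exponent `τ` under `P`. -/
def PowerLawTails {Ω : Type*} [MeasurableSpace Ω] (P : Measure Ω) (W : Ω → ℝ)
    (τ : ℝ) : Prop :=
  ∃ l : ℝ → ℝ, (∀ x : ℝ, 0 < x → 0 < l x) ∧ SlowlyVarying l ∧
    ∃ x₀ : ℝ, ∀ x : ℝ, x₀ ≤ x → (P {ω | x ≤ W ω}).toReal = l x * x ^ (-(τ - 1))

/-- The ratio `log F(t) / log t`, valued in `[0,∞]` (it equals `∞` when `F t = 0` and
`0 < t < 1`, matching the convention `log 0 = -∞`). -/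
def betaRatio (F : ℝ → ℝ) (t : ℝ) : ℝ≥0∞ :=
  (if F t = 0 then ⊤ else ENNReal.ofReal (-Real.log (F t))) / ENNReal.ofReal (-Real.log t)

/-- `β⁺ = limsup_{t↓0} log F(t)/log t ∈ [0,∞]`. -/
def betaPlus (F : ℝ → ℝ) : ℝ≥0∞ := limsup (betaRatio F) (nhdsWithin 0 (Set.Ioi 0))

/-- `β⁻ = liminf_{t↓0} log F(t)/log t ∈ [0,∞]`. -/
def betaMinus (F : ℝ → ℝ) : ℝ≥0∞ := liminf (betaRatio F) (nhdsWithin 0 (Set.Ioi 0))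

/-- All the data of generalised scale-free percolation on `ℤ^d`:
a probability space, prototype weight and length variables `W, L`, a connection
function `h`, i.i.d. vertex weights `Wt`, i.i.d. uniform variables `U` and
i.i.d. edge lengths `Len` indexed by unordered pairs of vertices. -/
structure Data (d : ℕ) (Ω : Type*) [MeasurableSpace Ω] where
  P : Measure Ω
  W : Ω → ℝ
  L : Ω → ℝ
  h : (Fin d → ℝ) → ℝ → ℝ → ℝ
  Wt : (Fin d → ℤ) → Ω → ℝ
  U : Sym2 (Fin d → ℤ) → Ω → ℝ
  Len : Sym2 (Fin d → ℤ) → Ω → ℝ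

/-- Index type for the combined family of basic random variables. -/
inductive Idx (d : ℕ) : Type
  | wt : (Fin d → ℤ) → Idx d
  | unif : Sym2 (Fin d → ℤ) → Idx d
  | len : Sym2 (Fin d → ℤ) → Idx d

variable {d : ℕ} {Ω : Type*} [MeasurableSpace Ω]

/-- The combined family of basic random variables. -/
def Data.family (M : Data d Ω) : Idx d → Ω → ℝ
  | .wt v => M.Wt v
  | .unif e => M.U e
  | .len e => M.Len e

/-- The model assumptions of generalised scale-free percolation: `P` is a probability
measure; `W ≥ 1` and `L ≥ 0`; `h` takes values in `[0,1]`; the weights are distributed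
as `W`, the pair variables are uniform on `[0,1]`, the edge lengths are distributed as
`L`, and all these random variables are mutually independent. -/
def Data.Valid (M : Data d Ω) : Prop :=
  IsProbabilityMeasure M.P ∧ Measurable M.W ∧ Measurable M.L ∧
    (∀ ω, 1 ≤ M.W ω) ∧ (∀ ω, 0 ≤ M.L ω) ∧
    (∀ x w₁ w₂, M.h x w₁ w₂ ∈ Set.Icc (0 : ℝ) 1) ∧
    (∀ i, Measurable (M.family i)) ∧
    (∀ v ω, 1 ≤ M.Wt v ω) ∧ (∀ e ω, 0 ≤ M.Len e ω) ∧
    (∀ v, Measure.map (M.Wt v) M.P = Measure.map M.W M.P) ∧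
    (∀ e : Sym2 (Fin d → ℤ), ¬e.IsDiag →
      Measure.map (M.U e) M.P = volume.restrict (Set.Icc (0 : ℝ) 1)) ∧
    (∀ e : Sym2 (Fin d → ℤ), ¬e.IsDiag →
      Measure.map (M.Len e) M.P = Measure.map M.L M.P) ∧
    iIndepFun M.family M.P

/-- Adjacency in the random graph at sample point `ω`: nearest-neighbour edges are
always present, and an edge between `u,v` with `‖u-v‖ > 1` is present iff the
attached uniform variable is at most `h (u-v) W_u W_v`. -/
def Data.Adj (M : Data d Ω) (ω : Ω) (u v : Fin d → ℤ) : Prop :=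
  znorm (u - v) = 1 ∨
    (1 < znorm (u - v) ∧
      M.U s(u, v) ω ≤ M.h (fun i => ((u - v) i : ℝ)) (M.Wt u ω) (M.Wt v ω))

/-- Cost of traversing the edge `{u,v}` from `u` to `v`, for penalty function `f`. -/
def Data.cost (M : Data d Ω) (f : ℝ → ℝ → ℝ) (ω : Ω) (u v : Fin d → ℤ) : ℝ :=
  M.Len s(u, v) ω * f (M.Wt u ω) (M.Wt v ω)

/-- `π` restricted to `{0,…,k}` is a self-avoiding path in the graph at `ω`. -/
def Data.IsPathSeg (M : Data d Ω) (ω : Ω) (k : ℕ) (π : ℕ → Fin d → ℤ) : Prop :=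
  (∀ i, i < k → M.Adj ω (π i) (π (i + 1))) ∧
    ∀ i j, i ≤ k → j ≤ k → π i = π j → i = j

/-- Total cost of the first `k` steps of `π`. -/
def Data.pathCost (M : Data d Ω) (f : ℝ → ℝ → ℝ) (ω : Ω) (k : ℕ)
    (π : ℕ → Fin d → ℤ) : ℝ≥0∞ :=
  ∑ i ∈ Finset.range k, ENNReal.ofReal (M.cost f ω (π i) (π (i + 1)))

/-- Cost-distance from `u` to `v`: the infimum of costs of paths from `u` to `v`. -/
def Data.costDist (M : Data d Ω) (f : ℝ → ℝ → ℝ) (ω : Ω) (u v : Fin d → ℤ) : ℝ≥0∞ :=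
  ⨅ (k : ℕ) (π : ℕ → Fin d → ℤ) (_ : π 0 = u) (_ : π k = v)
    (_ : M.IsPathSeg ω k π), M.pathCost f ω k π

/-- Explosion time `Y_f(v) = lim_{k→∞} inf { t : |B^{f,L}(v,t)| > k }`. -/
def Data.explosionTime (M : Data d Ω) (f : ℝ → ℝ → ℝ) (ω : Ω) (v : Fin d → ℤ) : ℝ≥0∞ :=
  ⨆ k : ℕ, sInf {t : ℝ≥0∞ |
    ∃ S : Finset (Fin d → ℤ), k < S.card ∧ ∀ u ∈ S, M.costDist f ω v u ≤ t}

/-- `π` is an infinite self-avoiding path starting at `v₀` in the graph at `ω`. -/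
def Data.InfPath (M : Data d Ω) (ω : Ω) (v₀ : Fin d → ℤ) (π : ℕ → Fin d → ℤ) : Prop :=
  π 0 = v₀ ∧ Function.Injective π ∧ ∀ i, M.Adj ω (π i) (π (i + 1))

/-- Total cost of an infinite path. -/
def Data.infPathCost (M : Data d Ω) (f : ℝ → ℝ → ℝ) (ω : Ω)
    (π : ℕ → Fin d → ℤ) : ℝ≥0∞ :=
  ∑' i, ENNReal.ofReal (M.cost f ω (π i) (π (i + 1)))

/-- The set of neighbours of `v` joined to `v` by an edge of cost at most `t`;
`N₁^t(v)` is its cardinality. -/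
def Data.cheapNbrs (M : Data d Ω) (f : ℝ → ℝ → ℝ) (ω : Ω) (v : Fin d → ℤ)
    (t : ℝ) : Set (Fin d → ℤ) :=
  {u | M.Adj ω v u ∧ M.cost f ω v u ≤ t}

/-- Cumulative distribution function `F_L` of the edge-length variable `L`. -/
def Data.cdf (M : Data d Ω) : ℝ → ℝ := fun t => (M.P {ω | M.L ω ≤ t}).toReal

/-- `f` is the polynomial penalty function with coefficients `a` and exponents
`μe, νe` over the finite index set `I`. -/
def IsPolyPenalty {ι : Type} (f : ℝ → ℝ → ℝ) (I : Finset ι) (a μe νe : ι → ℝ) : Prop :=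
  I.Nonempty ∧ (∀ i ∈ I, 0 < a i ∧ 0 ≤ μe i ∧ 0 ≤ νe i) ∧
    ∀ w₁ w₂ : ℝ, 1 ≤ w₁ → 1 ≤ w₂ → f w₁ w₂ = ∑ i ∈ I, a i * w₁ ^ μe i * w₂ ^ νe i

/-- `degf` is the degree `max_{i∈I} (μ_i + ν_i)` of the polynomial penalty. -/
def IsPolyDeg {ι : Type} (I : Finset ι) (μe νe : ι → ℝ) (degf : ℝ) : Prop :=
  (∀ i ∈ I, μe i + νe i ≤ degf) ∧ ∃ i ∈ I, μe i + νe i = degf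

end SFP


open Function

section Independence

variable {Ω ι κ β : Type*} [MeasurableSpace Ω] [MeasurableSpace β] {μ : Measure Ω}

theorem ProbabilityTheory.iIndepFun.iIndepSet_biInter_preimage {F : ι → Ω → β}
    (hF : iIndepFun F μ) (hFm : ∀ i, Measurable (F i)) {B : ι → Set β}
    (hB : ∀ i, MeasurableSet (B i)) {t : κ → Finset ι} (ht : Pairwise (Disjoint on t)) :
    iIndepSet (fun k => ⋂ i ∈ t k, F i ⁻¹' B i) μ := by
  classical
  rw [iIndepSet_iff_meas_biInter fun k =>
    Finset.measurableSet_biInter _ fun i _ => hFm i (hB i)]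
  intro s
  rw [← Finset.set_biInter_biUnion, hF.measure_inter_preimage_eq_mul _ fun i _ => hB i,
    Finset.prod_biUnion (ht.set_pairwise _)]
  exact Finset.prod_congr rfl fun k _ =>
    (hF.measure_inter_preimage_eq_mul _ fun i _ => hB i).symm

theorem ProbabilityTheory.ae_infinite_setOf_mem_of_iIndepSet [Countable ι] [Infinite ι]
    {s : ι → Set Ω} (hsm : ∀ i, MeasurableSet (s i)) (hs : iIndepSet s μ)
    (hsum : ∑' i, μ (s i) = ∞) : ∀ᵐ ω ∂μ, {i | ω ∈ s i}.Infinite := by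
  have := hs.isProbabilityMeasure
  obtain ⟨e⟩ : Nonempty (ℕ ≃ ι) := nonempty_equiv_of_countable
  have hlim := measure_limsup_eq_one (s := s ∘ e) (fun n => hsm _)
    (iIndep.precomp e.injective hs) ((e.tsum_eq fun i => μ (s i)).trans hsum)
  filter_upwards [(mem_ae_iff_prob_eq_one
    (MeasurableSet.measurableSet_limsup fun n => hsm _)).2 hlim] with ω hω
  rw [← Nat.cofinite_eq_atTop, cofinite.limsup_set_eq] at hω
  exact fun hfin => hω (hfin.preimage e.injective.injOn)

theorem MeasureTheory.exists_ge_measure_preimage_Iic_pos [IsProbabilityMeasure μ]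
    {X : Ω → ℝ} (hX : Measurable X) (c : ℝ) : ∃ x, c ≤ x ∧ 0 < μ (X ⁻¹' Iic x) := by
  have h := tendsto_measure_Iic_atTop (μ.map X)
  rw [Measure.map_apply hX MeasurableSet.univ, preimage_univ, measure_univ] at h
  obtain ⟨x, hx, hc⟩ :=
    ((h.eventually (lt_mem_nhds zero_lt_one)).and (eventually_ge_atTop c)).exists
  exact ⟨x, hc, by rwa [Measure.map_apply hX measurableSet_Iic] at hx⟩

end Independence

lemma min_one_le_rpow {b p : ℝ} (hb : 0 ≤ b) (hp0 : 0 ≤ p) (hp1 : p ≤ 1) :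
    min 1 b ≤ b ^ p := by
  rcases le_total b 1 with h | h
  · calc min 1 b ≤ b ^ (1 : ℝ) := by rw [Real.rpow_one]; exact min_le_right _ _
      _ ≤ b ^ p := Real.rpow_le_rpow_of_exponent_ge' hb h hp0 hp1
  · exact (min_le_left _ _).trans (Real.one_le_rpow h hp0)

namespace SFP

variable {d : ℕ}

lemma znorm_nonneg (x : Fin d → ℤ) : 0 ≤ znorm x := Real.sqrt_nonneg _

lemma znorm_zero : znorm (0 : Fin d → ℤ) = 0 := by simp [znorm, rnorm]

lemma znorm_sub_comm (u v : Fin d → ℤ) : znorm (u - v) = znorm (v - u) := by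
  simp only [znorm, rnorm, Pi.sub_apply, Int.cast_sub]
  congr 1
  exact Finset.sum_congr rfl fun i _ => by ring

@[simp]
lemma znorm_neg (x : Fin d → ℤ) : znorm (-x) = znorm x := by
  rw [← zero_sub, znorm_sub_comm, sub_zero]

lemma abs_le_znorm (x : Fin d → ℤ) (i : Fin d) : |(x i : ℝ)| ≤ znorm x := by
  rw [← Real.sqrt_sq_eq_abs]
  exact Real.sqrt_le_sqrt (Finset.single_le_sum (f := fun j => (x j : ℝ) ^ 2)
    (fun j _ => sq_nonneg _) (Finset.mem_univ i))

lemma znorm_le_of_abs_le {x : Fin d → ℤ} {m : ℝ} (hm : 0 ≤ m) (h : ∀ i, |(x i : ℝ)| ≤ m) :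
    znorm x ≤ Real.sqrt d * m := by
  rw [← Real.sqrt_sq hm, ← Real.sqrt_mul (Nat.cast_nonneg d)]
  refine Real.sqrt_le_sqrt ?_
  calc ∑ i, (x i : ℝ) ^ 2 ≤ ∑ _i : Fin d, m ^ 2 :=
        Finset.sum_le_sum fun i _ => sq_le_sq' (abs_le.1 (h i)).1 (abs_le.1 (h i)).2
    _ = d * m ^ 2 := by simp

lemma one_le_znorm {x : Fin d → ℤ} (hx : x ≠ 0) : 1 ≤ znorm x := by
  obtain ⟨i, hi⟩ := Function.ne_iff.1 hx
  calc (1 : ℝ) ≤ |(x i : ℝ)| := by exact_mod_cast Int.one_le_abs hi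
    _ ≤ znorm x := abs_le_znorm x i

lemma finite_setOf_znorm_le (R : ℝ) : {x : Fin d → ℤ | znorm x ≤ R}.Finite := by
  refine (Set.finite_Icc (fun _ => -⌈R⌉) fun _ => ⌈R⌉).subset fun x hx => ?_
  have hxi : ∀ i, |x i| ≤ ⌈R⌉ := fun i => by
    exact_mod_cast (abs_le_znorm x i).trans (hx.out.trans (Int.le_ceil R))
  exact ⟨fun i => (abs_le.1 (hxi i)).1, fun i => (abs_le.1 (hxi i)).2⟩

def dyadicCube (d k : ℕ) : Finset (Fin d → ℤ) :=
  Finset.Icc (fun _ => 2 ^ k) fun _ => 2 ^ (k + 1) - 1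

lemma card_dyadicCube (k : ℕ) : (dyadicCube d k).card = 2 ^ (k * d) := by
  have h : ((2 : ℤ) ^ (k + 1) - 2 ^ k).toNat = 2 ^ k := by
    rw [pow_succ, mul_two, add_sub_cancel_right]
    exact_mod_cast Int.toNat_natCast (2 ^ k)
  simp [dyadicCube, Pi.card_Icc, Int.card_Icc, h, pow_mul]

lemma znorm_le_of_mem_dyadicCube {k : ℕ} {x : Fin d → ℤ} (hx : x ∈ dyadicCube d k) :
    znorm x ≤ Real.sqrt d * 2 ^ (k + 1) := by
  rw [dyadicCube, Finset.mem_Icc] at hx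
  refine znorm_le_of_abs_le (by positivity) fun i => ?_
  have h0 : (0 : ℤ) ≤ x i := le_trans (by positivity) (hx.1 i)
  rw [abs_of_nonneg (by exact_mod_cast h0)]
  exact_mod_cast (hx.2 i).trans (sub_le_self _ zero_le_one)

lemma ne_zero_of_mem_dyadicCube (hd : 1 ≤ d) {k : ℕ} {x : Fin d → ℤ}
    (hx : x ∈ dyadicCube d k) : x ≠ 0 := by
  rintro rfl
  have h := (Finset.mem_Icc.1 hx).1 ⟨0, hd⟩
  simp only [Pi.zero_apply] at h
  exact (pow_pos two_pos k).not_ge h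

lemma pairwise_disjoint_dyadicCube (hd : 1 ≤ d) : Pairwise (Disjoint on dyadicCube d) := by
  intro k l hkl
  refine Finset.disjoint_left.2 fun x hxk hxl => hkl ?_
  simp only [dyadicCube, Finset.mem_Icc] at hxk hxl
  have hk : 2 ^ k ≤ x ⟨0, hd⟩ ∧ x ⟨0, hd⟩ ≤ 2 ^ (k + 1) - 1 := ⟨hxk.1 _, hxk.2 _⟩
  have hl : 2 ^ l ≤ x ⟨0, hd⟩ ∧ x ⟨0, hd⟩ ≤ 2 ^ (l + 1) - 1 := ⟨hxl.1 _, hxl.2 _⟩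
  by_contra hne
  rcases Nat.lt_or_gt_of_ne hne with h | h
  · have := pow_le_pow_right₀ one_le_two (Nat.succ_le_of_lt h) (M₀ := ℤ); omega
  · have := pow_le_pow_right₀ one_le_two (Nat.succ_le_of_lt h) (M₀ := ℤ); omega

theorem tsum_ofReal_inv_znorm_pow_eq_top (hd : 1 ≤ d) :
    ∑' x : Fin d → ℤ, ENNReal.ofReal (znorm x ^ d)⁻¹ = ∞ := by
  set c : ℝ := ((2 * Real.sqrt d) ^ d)⁻¹
  have hc : 0 < c := by
    have : (0 : ℝ) < d := by exact_mod_cast hd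
    positivity
  have hcube : ∀ k, ENNReal.ofReal c ≤
      ∑ x ∈ dyadicCube d k, ENNReal.ofReal (znorm x ^ d)⁻¹ := by
    intro k
    rw [← ENNReal.ofReal_sum_of_nonneg fun x _ => by positivity [znorm_nonneg x]]
    refine ENNReal.ofReal_le_ofReal ?_
    calc c = (dyadicCube d k).card • (c / 2 ^ (k * d)) := by
          rw [card_dyadicCube, nsmul_eq_mul]; push_cast; field_simp
      _ ≤ ∑ x ∈ dyadicCube d k, (znorm x ^ d)⁻¹ := by
          refine Finset.card_nsmul_le_sum _ _ _ fun x hx => ?_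
          have hz : 0 < znorm x ^ d :=
            pow_pos (one_pos.trans_le (one_le_znorm (ne_zero_of_mem_dyadicCube hd hx))) d
          calc c / 2 ^ (k * d) = ((Real.sqrt d * 2 ^ (k + 1)) ^ d)⁻¹ := by
                rw [div_eq_mul_inv, ← mul_inv, pow_mul, ← mul_pow, pow_succ]; ring_nf
            _ ≤ (znorm x ^ d)⁻¹ :=
                inv_anti₀ hz (pow_le_pow_left₀ (znorm_nonneg x)
                  (znorm_le_of_mem_dyadicCube hx) d)
  have hK : ∀ K : ℕ, (K : ℝ≥0∞) * ENNReal.ofReal c ≤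
      ∑' x, ENNReal.ofReal (znorm x ^ d)⁻¹ := fun K =>
    calc (K : ℝ≥0∞) * ENNReal.ofReal c = ∑ _k ∈ Finset.range K, ENNReal.ofReal c := by simp
      _ ≤ ∑ k ∈ Finset.range K, ∑ x ∈ dyadicCube d k, ENNReal.ofReal (znorm x ^ d)⁻¹ :=
          Finset.sum_le_sum fun k _ => hcube k
      _ = ∑ x ∈ (Finset.range K).biUnion (dyadicCube d), ENNReal.ofReal (znorm x ^ d)⁻¹ :=
          (Finset.sum_biUnion ((pairwise_disjoint_dyadicCube hd).set_pairwise _)).symm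
      _ ≤ _ := ENNReal.sum_le_tsum _
  by_contra h
  obtain ⟨K, hK'⟩ := ENNReal.exists_nat_mul_gt (ENNReal.ofReal_pos.2 hc).ne' h
  exact (hK K).not_gt hK'

lemma lfun_antitoneOn {c₂ γ : ℝ} (hc₂ : 0 ≤ c₂) (hγ : 0 ≤ γ) :
    AntitoneOn (lfun c₂ γ) (Ici 1) := fun a ha b _ hab => by
  have hlog : Real.log a ^ γ ≤ Real.log b ^ γ :=
    Real.rpow_le_rpow (Real.log_nonneg ha) (Real.log_le_log (one_pos.trans_le ha) hab) hγ
  exact Real.exp_le_exp.2 (by nlinarith)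

/-- Since `α ≤ 1`, `(w₁ w₂ / ‖x‖^d)^α ≥ min 1 (w₁ w₂ / ‖x‖^d) ≥ ‖x‖^{-d}`. -/
theorem EdgeBoundsC.le_of_le_one {h : (Fin d → ℝ) → ℝ → ℝ → ℝ} {α : ℝ≥0∞}
    {γ cl cu cl1 cu1 c₂ : ℝ} (hEB : EdgeBoundsC h α γ cl cu cl1 cu1 c₂) (hα : α ≤ 1)
    {x : Fin d → ℝ} (hx : 1 ≤ rnorm x) {w₁ w₂ : ℝ} (h₁ : 1 ≤ w₁) (h₂ : 1 ≤ w₂) :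
    cl * min (lfun c₂ γ w₁ * lfun c₂ γ w₂) (rnorm x ^ d)⁻¹ ≤ h x w₁ w₂ := by
  obtain ⟨-, hcl, -, -, -, -, ⟨-, hb⟩ | ⟨rfl, -⟩⟩ := hEB
  · have hx0 : x ≠ 0 := by
      rintro rfl
      norm_num [rnorm] at hx
    have hr : 1 ≤ rnorm x ^ d := one_le_pow₀ hx
    refine le_trans ?_ (hb x hx0 w₁ w₂ h₁ h₂).1
    gcongr
    calc (rnorm x ^ d)⁻¹ = min 1 (rnorm x ^ d)⁻¹ :=
          (min_eq_right (inv_le_one_of_one_le₀ hr)).symm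
      _ ≤ min 1 (w₁ * w₂ / rnorm x ^ d) := by
          gcongr
          rw [div_eq_mul_inv]
          exact le_mul_of_one_le_left (by positivity) (one_le_mul_of_one_le_of_one_le h₁ h₂)
      _ ≤ _ := min_one_le_rpow (by positivity) ENNReal.toReal_nonneg
          (by simpa using ENNReal.toReal_mono ENNReal.one_ne_top hα)
  · simp at hα

def edgeNorm : Sym2 (Fin d → ℤ) → ℝ := Sym2.lift ⟨fun u v => znorm (u - v), znorm_sub_comm⟩

def cheapEdgeIndices (x : Fin d → ℤ) : Finset (Idx d) :=
  open Classical in {.wt x, .unif s(0, x), .len s(0, x)}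

def cheapEdgeSet (w₀ κ t₀ : ℝ) : Idx d → Set ℝ
  | .wt _ => Iic w₀
  | .unif e => Iic (κ / edgeNorm e ^ d)
  | .len _ => Iic t₀

lemma measurableSet_cheapEdgeSet (w₀ κ t₀ : ℝ) (i : Idx d) :
    MeasurableSet (cheapEdgeSet w₀ κ t₀ i) := by
  cases i <;> exact measurableSet_Iic

lemma pairwise_disjoint_cheapEdgeIndices : Pairwise (Disjoint on cheapEdgeIndices (d := d)) := by
  intro x y hxy
  refine Finset.disjoint_left.2 fun i hix hiy => hxy ?_
  simp only [cheapEdgeIndices, Finset.mem_insert, Finset.mem_singleton] at hix hiy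
  rcases hix with rfl | rfl | rfl <;> rcases hiy with h | h | h <;> simp_all

namespace Data

variable {Ω : Type*} [MeasurableSpace Ω] {M : Data d Ω} {f : ℝ → ℝ → ℝ} {ω : Ω}

lemma Adj.ne {u v : Fin d → ℤ} (h : M.Adj ω u v) : u ≠ v := by
  rintro rfl
  rcases h with h | ⟨h, -⟩ <;> simp only [sub_self, znorm_zero] at h <;> linarith

lemma costDist_le_cost {u v : Fin d → ℤ} (h : M.Adj ω u v) :
    M.costDist f ω u v ≤ ENNReal.ofReal (M.cost f ω u v) := by
  let π : ℕ → Fin d → ℤ := fun i => if i = 0 then u else v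
  have hπ : M.IsPathSeg ω 1 π := by
    refine ⟨fun i hi => ?_, fun i j hi hj hij => ?_⟩
    · obtain rfl : i = 0 := by omega
      simpa [π] using h
    · interval_cases i <;> interval_cases j <;> simp_all [π, h.ne, h.ne.symm]
  refine iInf_le_of_le 1 <| iInf_le_of_le π <| iInf_le_of_le rfl <| iInf_le_of_le rfl <|
    iInf_le_of_le hπ ?_
  simp [pathCost, π]

theorem explosionTime_le_of_infinite_cheapNbrs {v : Fin d → ℤ} {T : ℝ}
    (h : (M.cheapNbrs f ω v T).Infinite) : M.explosionTime f ω v ≤ ENNReal.ofReal T := by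
  refine iSup_le fun k => sInf_le ?_
  obtain ⟨S, hS, hcard⟩ := h.exists_subset_card_eq (k + 1)
  refine ⟨S, by omega, fun u hu => ?_⟩
  obtain ⟨hadj, hcost⟩ := hS hu
  exact (costDist_le_cost hadj).trans (ENNReal.ofReal_le_ofReal hcost)

lemma cheapNbrs_mono (v : Fin d → ℤ) : Monotone (M.cheapNbrs f ω v) :=
  fun _ _ hT _ ⟨hadj, hcost⟩ => ⟨hadj, hcost.trans hT⟩

/-- The event `W_x ≤ w₀`, `U_{0x} ≤ κ ‖x‖^{-d}`, `L_{0x} ≤ t₀`, as a cylinder event of the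
independent family `M.family` over the indices `cheapEdgeIndices x`. -/
def cheapEdgeEvent (M : Data d Ω) (w₀ κ t₀ : ℝ) (x : Fin d → ℤ) : Set Ω :=
  ⋂ i ∈ cheapEdgeIndices x, M.family i ⁻¹' cheapEdgeSet w₀ κ t₀ i

lemma mem_cheapEdgeEvent {w₀ κ t₀ : ℝ} {x : Fin d → ℤ} :
    ω ∈ M.cheapEdgeEvent w₀ κ t₀ x ↔
      M.Wt x ω ≤ w₀ ∧ M.U s(0, x) ω ≤ κ / znorm x ^ d ∧ M.Len s(0, x) ω ≤ t₀ := by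
  simp [cheapEdgeEvent, cheapEdgeIndices, cheapEdgeSet, family, edgeNorm]

namespace Valid

lemma isProbabilityMeasure (hM : M.Valid) : IsProbabilityMeasure M.P := hM.1

lemma measurable_W (hM : M.Valid) : Measurable M.W := hM.2.1

lemma measurable_L (hM : M.Valid) : Measurable M.L := hM.2.2.1

lemma measurable_family (hM : M.Valid) : ∀ i, Measurable (M.family i) := hM.2.2.2.2.2.2.1

lemma one_le_Wt (hM : M.Valid) : ∀ x ω, 1 ≤ M.Wt x ω := hM.2.2.2.2.2.2.2.1

lemma Len_nonneg (hM : M.Valid) : ∀ e ω, 0 ≤ M.Len e ω := hM.2.2.2.2.2.2.2.2.1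

lemma iIndepFun_family (hM : M.Valid) : iIndepFun M.family M.P :=
  hM.2.2.2.2.2.2.2.2.2.2.2.2

lemma measure_Wt_le (hM : M.Valid) (x : Fin d → ℤ) (w : ℝ) :
    M.P (M.Wt x ⁻¹' Iic w) = M.P (M.W ⁻¹' Iic w) := by
  obtain ⟨-, hW, -, -, -, -, hfam, -, -, hlaw, -⟩ := hM
  exact (IdentDistrib.mk (hfam (.wt x)).aemeasurable hW.aemeasurable
    (hlaw x)).measure_mem_eq measurableSet_Iic

lemma measure_Len_le (hM : M.Valid) {e : Sym2 (Fin d → ℤ)} (he : ¬e.IsDiag) (t : ℝ) :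
    M.P (M.Len e ⁻¹' Iic t) = M.P (M.L ⁻¹' Iic t) := by
  obtain ⟨-, -, hL, -, -, -, hfam, -, -, -, -, hlaw, -⟩ := hM
  exact (IdentDistrib.mk (hfam (.len e)).aemeasurable hL.aemeasurable
    (hlaw e he)).measure_mem_eq measurableSet_Iic

lemma measure_U_le (hM : M.Valid) {e : Sym2 (Fin d → ℤ)} (he : ¬e.IsDiag) {p : ℝ}
    (hp : p ≤ 1) : M.P (M.U e ⁻¹' Iic p) = ENNReal.ofReal p := by
  obtain ⟨-, -, -, -, -, -, hfam, -, -, -, hlaw, -⟩ := hM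
  have hU : Measurable (M.U e) := hfam (.unif e)
  rw [← Measure.map_apply hU measurableSet_Iic, hlaw e he,
    Measure.restrict_apply measurableSet_Iic, inter_comm, ← Ici_inter_Iic, inter_assoc,
    Iic_inter_Iic, inf_eq_right.2 hp, Ici_inter_Iic, Real.volume_Icc, sub_zero]

lemma measure_cheapEdgeEvent (hM : M.Valid) {w₀ κ t₀ : ℝ} (hκ0 : 0 ≤ κ) (hκ1 : κ ≤ 1)
    {x : Fin d → ℤ} (hx : x ≠ 0) :
    M.P (M.cheapEdgeEvent w₀ κ t₀ x) =
      M.P (M.W ⁻¹' Iic w₀) * (ENNReal.ofReal (κ / znorm x ^ d) * M.P (M.L ⁻¹' Iic t₀)) := by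
  classical
  have he : ¬(s(0, x) : Sym2 (Fin d → ℤ)).IsDiag := by
    rw [Sym2.mk_isDiag_iff]
    exact hx.symm
  have hp : κ / znorm x ^ d ≤ 1 :=
    (div_le_self hκ0 (one_le_pow₀ (one_le_znorm hx))).trans hκ1
  rw [cheapEdgeEvent, hM.iIndepFun_family.measure_inter_preimage_eq_mul _
    fun i _ => measurableSet_cheapEdgeSet w₀ κ t₀ i, cheapEdgeIndices,
    Finset.prod_insert (by simp), Finset.prod_insert (by simp), Finset.prod_singleton]
  simp only [cheapEdgeSet, family, edgeNorm, Sym2.lift_mk, zero_sub, znorm_neg]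
  rw [hM.measure_Wt_le, hM.measure_Len_le he, hM.measure_U_le he hp]

theorem ae_infinite_cheapEdgeEvent (hd : 1 ≤ d) (hM : M.Valid) {w₀ κ t₀ : ℝ}
    (hw₀ : 0 < M.P (M.W ⁻¹' Iic w₀)) (ht₀ : 0 < M.P (M.L ⁻¹' Iic t₀)) (hκ0 : 0 < κ)
    (hκ1 : κ ≤ 1) : ∀ᵐ ω ∂M.P, {x | ω ∈ M.cheapEdgeEvent w₀ κ t₀ x}.Infinite := by
  have : Nonempty (Fin d) := ⟨⟨0, hd⟩⟩
  refine ae_infinite_setOf_mem_of_iIndepSet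
    (fun x => Finset.measurableSet_biInter _ fun i _ =>
      hM.measurable_family i (measurableSet_cheapEdgeSet ..))
    (hM.iIndepFun_family.iIndepSet_biInter_preimage hM.measurable_family
      (measurableSet_cheapEdgeSet w₀ κ t₀) pairwise_disjoint_cheapEdgeIndices) (top_unique ?_)
  set c := M.P (M.W ⁻¹' Iic w₀) * M.P (M.L ⁻¹' Iic t₀) * ENNReal.ofReal κ
  have hterm : ∀ x, c * ENNReal.ofReal (znorm x ^ d)⁻¹ ≤ M.P (M.cheapEdgeEvent w₀ κ t₀ x) := by
    intro x
    rcases eq_or_ne x 0 with rfl | hx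
    · -- the left side vanishes, as `(0 ^ d)⁻¹ = 0`
      simp [znorm_zero, zero_pow (Nat.one_le_iff_ne_zero.1 hd)]
    · rw [hM.measure_cheapEdgeEvent hκ0.le hκ1 hx, div_eq_mul_inv, ENNReal.ofReal_mul hκ0.le]
      exact le_of_eq (by ring)
  calc ∞ = c * ∑' x : Fin d → ℤ, ENNReal.ofReal (znorm x ^ d)⁻¹ := by
        rw [tsum_ofReal_inv_znorm_pow_eq_top hd, ENNReal.mul_top]
        exact mul_ne_zero (mul_ne_zero hw₀.ne' ht₀.ne') (ENNReal.ofReal_pos.2 hκ0).ne'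
    _ ≤ _ := by
        rw [← ENNReal.tsum_mul_left]
        exact ENNReal.tsum_le_tsum hterm

end Valid

variable {α : ℝ≥0∞} {γ cl cu cl1 cu1 c₂ μ w₀ κ t₀ : ℝ}

theorem mem_cheapNbrs_of_mem_cheapEdgeEvent (hM : M.Valid)
    (hEB : EdgeBoundsC M.h α γ cl cu cl1 cu1 c₂) (hα : α ≤ 1) (hμ : 0 ≤ μ) (hκ : κ ≤ cl)
    {x : Fin d → ℤ} (hω : ω ∈ M.cheapEdgeEvent w₀ κ t₀ x) (hx1 : 1 < znorm x)
    (hxd : (lfun c₂ γ (M.Wt 0 ω) * lfun c₂ γ w₀)⁻¹ ≤ znorm x ^ d) :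
    x ∈ M.cheapNbrs (fun w₁ w₂ => (w₁ * w₂) ^ μ) ω 0 (t₀ * (M.Wt 0 ω * w₀) ^ μ) := by
  obtain ⟨hWx, hU, hL⟩ := mem_cheapEdgeEvent.1 hω
  have hW0 := hM.one_le_Wt 0 ω
  have hWx1 := hM.one_le_Wt x ω
  have hr : rnorm (fun i => (((0 : Fin d → ℤ) - x) i : ℝ)) = znorm x :=
    (congrArg znorm (zero_sub x)).trans (znorm_neg x)
  have hlow := hEB.le_of_le_one hα (hr ▸ hx1.le) hW0 hWx1
  rw [hr] at hlow
  obtain ⟨hγ, hcl, -, -, -, hc₂, -⟩ := hEB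
  have hl : lfun c₂ γ w₀ ≤ lfun c₂ γ (M.Wt x ω) :=
    lfun_antitoneOn hc₂.le hγ.1.le hWx1 (hWx1.trans hWx) hWx
  have hsmall : (znorm x ^ d)⁻¹ ≤ lfun c₂ γ (M.Wt 0 ω) * lfun c₂ γ w₀ :=
    inv_le_of_inv_le₀ (mul_pos (Real.exp_pos _) (Real.exp_pos _)) hxd
  refine ⟨Or.inr ⟨by rwa [zero_sub, znorm_neg], hU.trans ?_⟩, ?_⟩
  · calc κ / znorm x ^ d ≤ cl * (znorm x ^ d)⁻¹ := by
          rw [div_eq_mul_inv]; gcongr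
      _ = cl * min (lfun c₂ γ (M.Wt 0 ω) * lfun c₂ γ w₀) (znorm x ^ d)⁻¹ := by
          rw [min_eq_right hsmall]
      _ ≤ cl * min (lfun c₂ γ (M.Wt 0 ω) * lfun c₂ γ (M.Wt x ω)) (znorm x ^ d)⁻¹ := by
          gcongr
          exact (Real.exp_pos _).le
      _ ≤ _ := hlow
  · exact mul_le_mul hL (Real.rpow_le_rpow (by positivity) (by gcongr) hμ) (by positivity)
      ((hM.Len_nonneg _ ω).trans hL)

theorem infinite_cheapNbrs_of_infinite_cheapEdgeEvent (hd : 1 ≤ d) (hM : M.Valid)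
    (hEB : EdgeBoundsC M.h α γ cl cu cl1 cu1 c₂) (hα : α ≤ 1) (hμ : 0 ≤ μ) (hκ : κ ≤ cl)
    (h : {x | ω ∈ M.cheapEdgeEvent w₀ κ t₀ x}.Infinite) :
    (M.cheapNbrs (fun w₁ w₂ => (w₁ * w₂) ^ μ) ω 0 (t₀ * (M.Wt 0 ω * w₀) ^ μ)).Infinite := by
  set R := max 1 (lfun c₂ γ (M.Wt 0 ω) * lfun c₂ γ w₀)⁻¹
  refine (h.sdiff (finite_setOf_znorm_le R)).mono fun x hx => ?_
  have hR : R < znorm x := not_le.1 hx.2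
  have h1 : 1 < znorm x := (le_max_left _ _).trans_lt hR
  exact mem_cheapNbrs_of_mem_cheapEdgeEvent hM hEB hα hμ hκ hx.1 h1
    ((le_max_right _ _).trans (hR.le.trans (le_self_pow₀ h1.le (by omega))))

theorem Valid.exists_ae_infinite_cheapNbrs (hd : 1 ≤ d) (hM : M.Valid) (hEB : EdgeBounds M.h α)
    (hα : α ≤ 1) (hμ : 0 ≤ μ) :
    ∃ w₀ t₀ : ℝ, 0 ≤ w₀ ∧ 0 ≤ t₀ ∧ 0 < M.P (M.Wt 0 ⁻¹' Iic w₀) ∧ ∀ᵐ ω ∂M.P,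
      (M.cheapNbrs (fun w₁ w₂ => (w₁ * w₂) ^ μ) ω 0 (t₀ * (M.Wt 0 ω * w₀) ^ μ)).Infinite := by
  obtain ⟨γ, cl, cu, cl1, cu1, c₂, hEB⟩ := hEB
  have := hM.isProbabilityMeasure
  obtain ⟨w₀, hw₀0, hw₀⟩ := exists_ge_measure_preimage_Iic_pos (μ := M.P) hM.measurable_W 0
  obtain ⟨t₀, ht₀0, ht₀⟩ := exists_ge_measure_preimage_Iic_pos (μ := M.P) hM.measurable_L 0
  refine ⟨w₀, t₀, hw₀0, ht₀0, by rwa [hM.measure_Wt_le], ?_⟩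
  filter_upwards [hM.ae_infinite_cheapEdgeEvent hd hw₀ ht₀ (lt_min one_pos hEB.2.1)
    (min_le_left _ _)] with ω hω
  exact infinite_cheapNbrs_of_infinite_cheapEdgeEvent hd hM hEB hα hμ (min_le_right _ _) hω

end Data

end SFP

theorem sfp_product_penalty_sideways_explosive_general
    {d : ℕ} (hd : 1 ≤ d) {Ω : Type*} [MeasurableSpace Ω] (M : SFP.Data d Ω)
    (hM : M.Valid)
    (α : ℝ≥0∞) (hα1 : α ≤ 1) (hEB : SFP.EdgeBounds M.h α)
    (μ : ℝ) (hμ : 0 < μ) :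
    M.P {ω | M.explosionTime (fun w₁ w₂ => (w₁ * w₂) ^ μ) ω 0 < ⊤} = 1 ∧
      ∃ T : ℝ,
        0 < M.P {ω | (M.cheapNbrs (fun w₁ w₂ => (w₁ * w₂) ^ μ) ω 0 T).Infinite} := by
  obtain ⟨w₀, t₀, hw₀0, ht₀0, hw₀, hae⟩ := hM.exists_ae_infinite_cheapNbrs hd hEB hα1 hμ.le
  refine ⟨?_, t₀ * (w₀ * w₀) ^ μ, hw₀.trans_le (measure_mono_ae ?_)⟩
  · have hY : ∀ᵐ ω ∂M.P, M.explosionTime (fun w₁ w₂ => (w₁ * w₂) ^ μ) ω 0 < ⊤ :=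
      hae.mono fun ω hω =>
        (SFP.Data.explosionTime_le_of_infinite_cheapNbrs hω).trans_lt ENNReal.ofReal_lt_top
    have := hM.isProbabilityMeasure
    exact (measure_congr (ae_eq_univ.2 (ae_iff.1 hY))).trans measure_univ
  · filter_upwards [hae] with ω hω hW0
    refine hω.mono (SFP.Data.cheapNbrs_mono _ ?_)
    have := hM.one_le_Wt 0 ω
    gcongr
    exact hW0

/-- For SFP on `ℤ^d` with power-law weights of exponent `τ ∈ (1,3)`,
long-range parameter `α ∈ (0,1]`, and product penalty `f(w₁,w₂) = (w₁w₂)^μ` with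
`μ > 0`: explosion occurs almost surely, and it is sideways explosion — there exists
`T < ∞` such that with positive probability the origin is incident to infinitely many
edges of cost at most `T`. -/
theorem sfp_product_penalty_sideways_explosive
    {d : ℕ} (hd : 1 ≤ d) {Ω : Type*} [MeasurableSpace Ω] (M : SFP.Data d Ω)
    (hM : M.Valid) (τ : ℝ) (hτ : τ ∈ Set.Ioo (1 : ℝ) 3)
    (hW : SFP.PowerLawTails M.P M.W τ)
    (α : ℝ≥0∞) (hα0 : 0 < α) (hα1 : α ≤ 1) (hEB : SFP.EdgeBounds M.h α)
    (μ : ℝ) (hμ : 0 < μ) :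
    M.P {ω | M.explosionTime (fun w₁ w₂ => (w₁ * w₂) ^ μ) ω 0 < ⊤} = 1 ∧
      ∃ T : ℝ,
        0 < M.P {ω | (M.cheapNbrs (fun w₁ w₂ => (w₁ * w₂) ^ μ) ω 0 T).Infinite} :=
  sfp_product_penalty_sideways_explosive_general hd M hM α hα1 hEB μ hμ
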